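/- arXiv:1605.00313 — 3 statements merged into one kernel-verified Lean document; each statement's English description precedes it below -/
import Mathlib

section
/- Let r ≥ 1 be an integer and let u, v, w be distinct points in ℤ² with |v−w| ≤ 2r and u not lying on either of the two circles of radius r passing through v and w. Then the Euclidean distance from u to the union of these two circles is at least 1/(480 r⁵). -/
/-!
If `O` is the centre of one of the circles, the other one is centred at `O' = v + w - O`.
The product of the powers `|u - O|² - r²` and `|u - O'|² - r²`, multiplied by `|v - w|²`,
is an integer polynomial in `r` and the coordinates of `u, v, w`: the centre drops out. It is
nonzero because `u` lies on neither circle, so its absolute value is at least `1`. If `u` is at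
distance `ε ≤ r` from the first circle, the first power is at most `3rε`, the second at most
`16r²`, and `|v - w|² ≤ 4r²`; hence `1 ≤ 192 r⁵ ε`.
-/

/-- Embedding of integer lattice points into the Euclidean plane. -/
noncomputable def toPlane (p : ℤ × ℤ) : EuclideanSpace ℝ (Fin 2) :=
  WithLp.toLp 2 ![(p.1 : ℝ), (p.2 : ℝ)]

lemma sq_dot_mul_normSq_eq_of_dot_eq_zero {R : Type*} [CommRing R] (p₁ p₂ m₁ m₂ q₁ q₂ : R)
    (h : m₁ * q₁ + m₂ * q₂ = 0) :
    (p₁ * m₁ + p₂ * m₂) ^ 2 * (q₁ ^ 2 + q₂ ^ 2) = (p₁ * q₂ - p₂ * q₁) ^ 2 * (m₁ ^ 2 + m₂ ^ 2) := by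
  -- the cofactor is `p² q̄ ⬝ m`, reading `p` and `q` as complex numbers
  linear_combination (((p₁ ^ 2 - p₂ ^ 2) * q₁ + 2 * p₁ * p₂ * q₂) * m₁
    + (2 * p₁ * p₂ * q₁ - (p₁ ^ 2 - p₂ ^ 2) * q₂) * m₂) * h

/-- `(x, y)` and `(v₁ + w₁ - x, v₂ + w₂ - y)` are the centres of the two circles of squared
radius `s` through `v` and `w`. -/
lemma normSq_sub_mul_power_mul_power {R : Type*} [CommRing R] (x y u₁ u₂ v₁ v₂ w₁ w₂ s : R)
    (hv : (x - v₁) ^ 2 + (y - v₂) ^ 2 = s) (hw : (x - w₁) ^ 2 + (y - w₂) ^ 2 = s) :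
    ((v₁ - w₁) ^ 2 + (v₂ - w₂) ^ 2) * (((u₁ - x) ^ 2 + (u₂ - y) ^ 2 - s)
      * ((u₁ - (v₁ + w₁ - x)) ^ 2 + (u₂ - (v₂ + w₂ - y)) ^ 2 - s))
      = ((u₁ - v₁) * (u₁ - w₁) + (u₂ - v₂) * (u₂ - w₂)) ^ 2 * ((v₁ - w₁) ^ 2 + (v₂ - w₂) ^ 2)
        - ((u₁ - v₁) * (w₂ - v₂) - (u₂ - v₂) * (w₁ - v₁)) ^ 2
          * (4 * s - ((v₁ - w₁) ^ 2 + (v₂ - w₂) ^ 2)) := by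
  have hmq : (v₁ + w₁ - 2 * x) * (w₁ - v₁) + (v₂ + w₂ - 2 * y) * (w₂ - v₂) = 0 := by
    linear_combination hw - hv
  have hm : (v₁ + w₁ - 2 * x) ^ 2 + (v₂ + w₂ - 2 * y) ^ 2
      = 4 * s - ((v₁ - w₁) ^ 2 + (v₂ - w₂) ^ 2) := by
    linear_combination 2 * hv + 2 * hw
  have hT := sq_dot_mul_normSq_eq_of_dot_eq_zero (u₁ - v₁) (u₂ - v₂) _ _ _ _ hmq
  -- the powers are `A ± T`, `A = (u - v) ⬝ (u - w)`, `T = (u - v) ⬝ (v + w - 2 (x, y))`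
  linear_combination ((v₁ - w₁) ^ 2 + (v₂ - w₂) ^ 2)
      * ((u₁ - (v₁ + w₁ - x)) ^ 2 + (u₂ - (v₂ + w₂ - y)) ^ 2 - s) * hv
    + ((v₁ - w₁) ^ 2 + (v₂ - w₂) ^ 2)
      * ((u₁ - x) ^ 2 + (u₂ - y) ^ 2 - (x - v₁) ^ 2 - (y - v₂) ^ 2) * hw
    - hT - ((u₁ - v₁) * (w₂ - v₂) - (u₂ - v₂) * (w₁ - v₁)) ^ 2 * hm

lemma dist_add_sub_left {E : Type*} [SeminormedAddCommGroup E] (a b c : E) :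
    dist (a + b - c) a = dist b c := by
  rw [dist_eq_norm, dist_eq_norm, add_sub_assoc, add_sub_cancel_left]

lemma sq_dist_eq (p q : EuclideanSpace ℝ (Fin 2)) :
    dist p q ^ 2 = (p 0 - q 0) ^ 2 + (p 1 - q 1) ^ 2 := by
  rw [EuclideanSpace.dist_eq, Real.sq_sqrt (by positivity)]
  simp [Fin.sum_univ_two, Real.dist_eq, sq_abs]

lemma toPlane_injective : Function.Injective toPlane := by
  intro p q h
  have h₀ := congrArg (· 0) h
  have h₁ := congrArg (· 1) h
  simp only [toPlane, Matrix.cons_val_zero, Matrix.cons_val_one, Int.cast_inj] at h₀ h₁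
  exact Prod.ext h₀ h₁

/-- `|v - w|²` times the product of the powers of `u` with respect to the two circles of
radius `r` through `v` and `w` (see `normSq_sub_mul_power_mul_power`). -/
def circlePairPower (r : ℤ) (u v w : ℤ × ℤ) : ℤ :=
  ((u.1 - v.1) * (u.1 - w.1) + (u.2 - v.2) * (u.2 - w.2)) ^ 2 * ((v.1 - w.1) ^ 2 + (v.2 - w.2) ^ 2)
    - ((u.1 - v.1) * (w.2 - v.2) - (u.2 - v.2) * (w.1 - v.1)) ^ 2
      * (4 * r ^ 2 - ((v.1 - w.1) ^ 2 + (v.2 - w.2) ^ 2))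

lemma sq_dist_mul_power_mul_power {r : ℤ} {u v w : ℤ × ℤ} {O : EuclideanSpace ℝ (Fin 2)}
    (hv : dist O (toPlane v) = r) (hw : dist O (toPlane w) = r) :
    dist (toPlane v) (toPlane w) ^ 2 * ((dist (toPlane u) O ^ 2 - r ^ 2)
      * (dist (toPlane u) (toPlane v + toPlane w - O) ^ 2 - r ^ 2)) = circlePairPower r u v w := by
  have hv' := sq_dist_eq O (toPlane v)
  have hw' := sq_dist_eq O (toPlane w)
  rw [hv] at hv'
  rw [hw] at hw'
  simp only [sq_dist_eq, circlePairPower, PiLp.add_apply, PiLp.sub_apply]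
  simp only [toPlane, Matrix.cons_val_zero, Matrix.cons_val_one] at hv' hw' ⊢
  push_cast
  exact normSq_sub_mul_power_mul_power _ _ _ _ _ _ _ _ _ hv'.symm hw'.symm

lemma one_div_le_abs_sub_of_one_le_abs {r D D' d : ℝ} (hr : 1 ≤ r) (hD : 0 ≤ D) (hD'₀ : 0 ≤ D')
    (hD' : D' ≤ D + 2 * r) (hd₀ : 0 ≤ d) (hd : d ≤ 2 * r)
    (h : 1 ≤ |d ^ 2 * ((D ^ 2 - r ^ 2) * (D' ^ 2 - r ^ 2))|) :
    1 / (192 * r ^ 5) ≤ |D - r| := by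
  have hr5 : 1 ≤ r ^ 5 := one_le_pow₀ hr
  rcases le_or_gt r |D - r| with hfar | hnear
  · calc 1 / (192 * r ^ 5) ≤ 1 := by rw [div_le_one (by positivity)]; linarith
      _ ≤ |D - r| := hr.trans hfar
  have hD2r : D ≤ 2 * r := by linarith [le_abs_self (D - r)]
  have hpow : |D ^ 2 - r ^ 2| ≤ 3 * r * |D - r| := by
    rw [show D ^ 2 - r ^ 2 = (D - r) * (D + r) by ring, abs_mul,
      abs_of_nonneg (by linarith : 0 ≤ D + r)]
    nlinarith [abs_nonneg (D - r)]
  have hpow' : |D' ^ 2 - r ^ 2| ≤ 16 * r ^ 2 := by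
    rw [abs_le]
    constructor <;> nlinarith
  have hd2 : d ^ 2 ≤ 4 * r ^ 2 := by nlinarith
  have hprod : 1 ≤ 192 * r ^ 5 * |D - r| :=
    calc 1 ≤ d ^ 2 * (|D ^ 2 - r ^ 2| * |D' ^ 2 - r ^ 2|) := by
          rwa [abs_mul, abs_mul, abs_of_nonneg (sq_nonneg d)] at h
      _ ≤ 4 * r ^ 2 * (3 * r * |D - r| * (16 * r ^ 2)) := by gcongr
      _ = 192 * r ^ 5 * |D - r| := by ring
  rw [div_le_iff₀ (by positivity)]
  linarith

theorem stmt_0_general (r : ℤ) (hr : 1 ≤ r) (u v w : ℤ × ℤ)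
    (hvw : v ≠ w)
    (hoff : ∀ O : EuclideanSpace ℝ (Fin 2),
      dist O (toPlane v) = r → dist O (toPlane w) = r → dist (toPlane u) O ≠ r) :
    ∀ O : EuclideanSpace ℝ (Fin 2),
      dist O (toPlane v) = r → dist O (toPlane w) = r →
        |dist (toPlane u) O - r| ≥ 1 / (480 * (r : ℝ) ^ 5) := by
  intro O hOv hOw
  have hr' : (1 : ℝ) ≤ r := by exact_mod_cast hr
  set O' := toPlane v + toPlane w - O with hO'
  have hO'v : dist O' (toPlane v) = r := by rw [hO', dist_add_sub_left, dist_comm, hOw]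
  have hO'w : dist O' (toPlane w) = r := by rw [hO', add_comm, dist_add_sub_left, dist_comm, hOv]
  have hvw' : dist (toPlane v) (toPlane w) ≤ 2 * r := by
    linarith [dist_triangle_left (toPlane v) (toPlane w) O]
  have hOO' : dist O O' ≤ 2 * r := by linarith [dist_triangle_right O O' (toPlane v)]
  have hK : circlePairPower r u v w ≠ 0 := by
    rw [← Int.cast_ne_zero (α := ℝ), ← sq_dist_mul_power_mul_power hOv hOw]
    refine mul_ne_zero (pow_ne_zero _ (dist_ne_zero.mpr (toPlane_injective.ne hvw)))
      (mul_ne_zero ?_ ?_) <;>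
      rw [sub_ne_zero, ne_eq, pow_left_inj₀ dist_nonneg (by linarith) two_ne_zero]
    exacts [hoff O hOv hOw, hoff O' hO'v hO'w]
  have hK₁ : (1 : ℝ) ≤ |(circlePairPower r u v w : ℝ)| := by exact_mod_cast Int.one_le_abs hK
  rw [← sq_dist_mul_power_mul_power hOv hOw] at hK₁
  refine le_trans ?_ (one_div_le_abs_sub_of_one_le_abs hr' dist_nonneg dist_nonneg
    (by linarith [dist_triangle (toPlane u) O O']) dist_nonneg hvw' hK₁)
  gcongr
  norm_num

/-- Integer lattice circle separation: if `u, v, w` are distinct integer points,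
`|v - w| ≤ 2r`, and `u` lies on neither radius-`r` circle through `v` and `w`,
then the distance from `u` to the union of these circles is at least `1/(480 r⁵)`. -/
theorem stmt_0 (r : ℤ) (hr : 1 ≤ r) (u v w : ℤ × ℤ)
    (huv : u ≠ v) (huw : u ≠ w) (hvw : v ≠ w)
    (hdist : dist (toPlane v) (toPlane w) ≤ 2 * r)
    (hoff : ∀ O : EuclideanSpace ℝ (Fin 2),
      dist O (toPlane v) = r → dist O (toPlane w) = r → dist (toPlane u) O ≠ r) :
    ∀ O : EuclideanSpace ℝ (Fin 2),
      dist O (toPlane v) = r → dist O (toPlane w) = r →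
        |dist (toPlane u) O - r| ≥ 1 / (480 * (r : ℝ) ^ 5) :=
  stmt_0_general r hr u v w hvw hoff
end

section
/- Let r ≥ 1 be an integer, b a nonzero integer, Δ > 0 with Δ² a positive integer satisfying Δ² ≤ 4r² − 1 and Δ ≤ 2r, |b|/Δ ≤ 3r, and λ = √(r² − Δ²/4). If 2λ|b|/Δ is not an integer, then the fractional part q = {2λ|b|/Δ} satisfies min{q, 1−q} ≥ 1/(96 r⁴). -/
/-- Lower bound on the distance from `2λ|b|/Δ` to the nearest integer. -/
theorem stmt_2 (r b : ℤ) (hr : 1 ≤ r) (hb : b ≠ 0)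
    (Δ lam : ℝ) (hΔpos : 0 < Δ)
    (hΔint : ∃ n : ℕ, 0 < n ∧ Δ ^ 2 = (n : ℝ))
    (hΔub : Δ ^ 2 ≤ 4 * (r : ℝ) ^ 2 - 1)
    (hΔ2r : Δ ≤ 2 * r)
    (hbΔ : |(b : ℝ)| / Δ ≤ 3 * r)
    (hlam : lam = Real.sqrt ((r : ℝ) ^ 2 - Δ ^ 2 / 4))
    (hnotint : ¬ ∃ m : ℤ, 2 * lam * |(b : ℝ)| / Δ = (m : ℝ)) :
    min (Int.fract (2 * lam * |(b : ℝ)| / Δ)) (1 - Int.fract (2 * lam * |(b : ℝ)| / Δ))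
      ≥ 1 / (96 * (r : ℝ) ^ 4) := by
  obtain ⟨n, hn0, hΔn⟩ := hΔint
  have hr' : (1:ℝ) ≤ (r:ℝ) := by exact_mod_cast hr
  have hΔne : Δ ≠ 0 := ne_of_gt hΔpos
  have hlam2 : lam ^ 2 = (r:ℝ)^2 - Δ^2/4 := by
    rw [hlam, Real.sq_sqrt]; nlinarith
  have hlampos : 0 < lam := by
    rw [hlam]; exact Real.sqrt_pos.mpr (by nlinarith)
  have habs : (1:ℤ) ≤ |b| := Int.one_le_abs hb
  have hb1 : (1:ℝ) ≤ |(b:ℝ)| := by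
    rw [← Int.cast_abs]; exact_mod_cast habs
  set x := 2 * lam * |(b:ℝ)| / Δ with hxdef
  have hxpos : 0 < x := by
    apply div_pos _ hΔpos; nlinarith
  have hlamle : lam ≤ (r:ℝ) := by nlinarith
  have hxle : x ≤ 6 * (r:ℝ)^2 := by
    have h0 : (0:ℝ) ≤ |(b:ℝ)| / Δ := div_nonneg (abs_nonneg _) hΔpos.le
    have := mul_le_mul (show 2*lam ≤ 2*(r:ℝ) by linarith) hbΔ h0 (by linarith)
    calc x = (2*lam) * (|(b:ℝ)|/Δ) := by rw [hxdef]; ring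
    _ ≤ 2*(r:ℝ) * (3*(r:ℝ)) := this
    _ = 6*(r:ℝ)^2 := by ring
  have h1 : x * Δ = 2 * lam * |(b:ℝ)| := by
    rw [hxdef]; field_simp
  have h3 : x^2 * Δ^2 = 4 * lam^2 * (b:ℝ)^2 := by
    rw [show x^2*Δ^2 = (x*Δ)^2 by ring, h1, mul_pow, mul_pow, sq_abs]; ring
  have hx2 : x ^ 2 * (n:ℝ) = (4*(r:ℝ)^2 - (n:ℝ)) * (b:ℝ)^2 := by
    linear_combination (-(x^2) - (b:ℝ)^2) * hΔn + h3 + 4*(b:ℝ)^2 * hlam2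
  have hnle : (n:ℝ) ≤ 4*(r:ℝ)^2 - 1 := hΔn ▸ hΔub
  have hnR : (1:ℝ) ≤ (n:ℝ) := by exact_mod_cast hn0
  have key : ∀ m : ℤ, 0 ≤ m → (m:ℝ) ≤ 6*(r:ℝ)^2 + 1 → x ≠ (m:ℝ) →
      1/(96*(r:ℝ)^4) ≤ |x - (m:ℝ)| := by
    intro m hm hmle hne
    have hmR : (0:ℝ) ≤ (m:ℝ) := by exact_mod_cast hm
    have hM : (4*r^2 - (n:ℤ)) * b^2 - m^2*(n:ℤ) ≠ 0 := by
      intro h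
      have hKr : (4*(r:ℝ)^2 - (n:ℝ)) * (b:ℝ)^2 - (m:ℝ)^2*(n:ℝ) = 0 := by
        exact_mod_cast congrArg (Int.cast : ℤ → ℝ) h
      have hx2' : x^2 = (m:ℝ)^2 := by
        have hnne : (n:ℝ) ≠ 0 := by linarith
        have h5 : x^2*(n:ℝ) = (m:ℝ)^2*(n:ℝ) := by linarith [hx2]
        exact mul_right_cancel₀ hnne h5
      have hfac : (x - m)*(x + m) = 0 := by linear_combination hx2'
      rcases mul_eq_zero.mp hfac with h' | h'
      · exact hne (by linarith)
      · linarith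
    have hM1 : (1:ℝ) ≤ |(4*(r:ℝ)^2 - (n:ℝ)) * (b:ℝ)^2 - (m:ℝ)^2*(n:ℝ)| := by
      have h6 := Int.one_le_abs hM
      calc (1:ℝ) ≤ ((|(4*r^2 - (n:ℤ)) * b^2 - m^2*(n:ℤ)| : ℤ) : ℝ) := by exact_mod_cast h6
      _ = |(4*(r:ℝ)^2 - (n:ℝ)) * (b:ℝ)^2 - (m:ℝ)^2*(n:ℝ)| := by push_cast; ring_nf
    have heq : (4*(r:ℝ)^2 - (n:ℝ)) * (b:ℝ)^2 - (m:ℝ)^2*(n:ℝ) = (x - m) * ((x + m)*(n:ℝ)) := by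
      linear_combination -hx2
    have hpos2 : 0 < (x + m)*(n:ℝ) := mul_pos (by linarith) (by linarith)
    rw [heq, abs_mul, abs_of_pos hpos2] at hM1
    have hA : (x + m)*(n:ℝ) ≤ 96*(r:ℝ)^4 := by
      have h2 := mul_le_mul (show x + m ≤ 12*(r:ℝ)^2 + 1 by linarith)
        hnle (by linarith) (by positivity)
      nlinarith [h2, sq_nonneg ((r:ℝ)^2), sq_nonneg ((r:ℝ)^2 - 1)]
    have h96 : (0:ℝ) < 96*(r:ℝ)^4 := by positivity
    rw [div_le_iff₀ h96]
    have hp := mul_nonneg (abs_nonneg (x - (m:ℝ))) (sub_nonneg.mpr hA)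
    have hsplit : |x - (m:ℝ)| * (96*(r:ℝ)^4) =
        |x - (m:ℝ)| * ((x+m)*(n:ℝ)) + |x - (m:ℝ)| * (96*(r:ℝ)^4 - (x+m)*(n:ℝ)) := by ring
    linarith [hp, hM1]
  have hfl : ((⌊x⌋:ℝ)) ≤ x := Int.floor_le x
  have hfl0 : 0 ≤ ⌊x⌋ := Int.floor_nonneg.mpr hxpos.le
  have hlt : x < (⌊x⌋:ℝ) + 1 := Int.lt_floor_add_one x
  have hne1 : x ≠ ((⌊x⌋:ℝ)) := fun h => hnotint ⟨⌊x⌋, h⟩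
  have hne2 : x ≠ ((⌊x⌋ + 1 : ℤ):ℝ) := fun h => hnotint ⟨⌊x⌋+1, h⟩
  have hfr : Int.fract x = x - (⌊x⌋:ℝ) := rfl
  rw [ge_iff_le, le_min_iff]
  constructor
  · have := key ⌊x⌋ hfl0 (by linarith) hne1
    rwa [abs_of_nonneg (by linarith), ← hfr] at this
  · have := key (⌊x⌋+1) (by omega) (by push_cast; linarith) hne2
    rw [abs_of_nonpos (by push_cast; linarith)] at this
    push_cast at this
    rw [hfr]
    linarith
end

section
/- Let r ≥ 1 be an integer and let u, v, w be distinct points of ℤ² with |v−w|² = 4r². If u does not lie on the circle of radius r through v and w (which is unique in this case), then the distance from u to this circle is at least 1/(5r). -/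
/-!
The power of `u` with respect to the circle with diameter `[v, w]` is
`d² - r² = ⟪u - v, u - w⟫`, where `d` is the distance from `u` to the centre. For lattice points
this is an integer, nonzero when `u` is off the circle, so `|d - r| (d + r) ≥ 1`. Either
`|d - r| ≥ 1`, or `d + r < 2r + 1 ≤ 3r` and hence `|d - r| ≥ 1/(3r)`.
-/

open RealInnerProductSpace

theorem real_inner_add_sub_eq_norm_sq_sub_norm_sq {E : Type*} [NormedAddCommGroup E]
    [InnerProductSpace ℝ E] (x y : E) : ⟪x + y, x - y⟫ = ‖x‖ ^ 2 - ‖y‖ ^ 2 := by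
  rw [inner_add_left, inner_sub_right, inner_sub_right, real_inner_comm x y,
    real_inner_self_eq_norm_sq, real_inner_self_eq_norm_sq]
  ring

theorem real_inner_sub_sub_eq_dist_midpoint_sq_sub {E : Type*} [NormedAddCommGroup E]
    [InnerProductSpace ℝ E] (u v w : E) :
    ⟪u - v, u - w⟫ = dist u ((1 / 2 : ℝ) • (v + w)) ^ 2 - dist v w ^ 2 / 4 := by
  have hv : u - v = (u - (1 / 2 : ℝ) • (v + w)) + (1 / 2 : ℝ) • (w - v) := by module
  have hw : u - w = (u - (1 / 2 : ℝ) • (v + w)) - (1 / 2 : ℝ) • (w - v) := by module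
  have hhalf : ‖(1 / 2 : ℝ) • (w - v)‖ ^ 2 = dist v w ^ 2 / 4 := by
    rw [norm_smul, dist_comm, dist_eq_norm]; norm_num; ring
  rw [hv, hw, real_inner_add_sub_eq_norm_sq_sub_norm_sq, hhalf, ← dist_eq_norm]

theorem toPlane_sub (p q : ℤ × ℤ) : toPlane p - toPlane q = toPlane (p - q) := by
  ext i; fin_cases i <;> simp [toPlane]

theorem inner_toPlane (p q : ℤ × ℤ) :
    ⟪toPlane p, toPlane q⟫ = ((p.1 * q.1 + p.2 * q.2 : ℤ) : ℝ) := by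
  simp [toPlane, EuclideanSpace.inner_toLp_toLp, mul_comm]

theorem one_div_five_mul_le_abs_sub {d r : ℝ} (hd : 0 ≤ d) (hr : 1 ≤ r)
    (h : 1 ≤ |d ^ 2 - r ^ 2|) : 1 / (5 * r) ≤ |d - r| := by
  have hprod : 1 ≤ |d - r| * (d + r) := by
    rwa [← abs_of_nonneg (by linarith : 0 ≤ d + r), ← abs_mul, mul_comm, ← sq_sub_sq]
  rw [div_le_iff₀ (by linarith)]
  rcases le_or_gt 1 |d - r| with hbig | hsmall
  · nlinarith
  · have : d + r ≤ 3 * r := by linarith [le_abs_self (d - r)]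
    nlinarith [abs_nonneg (d - r)]

theorem stmt_5_general (r : ℤ) (hr : 1 ≤ r) (u v w : ℤ × ℤ)
    (hdiam : dist (toPlane v) (toPlane w) ^ 2 = 4 * (r : ℝ) ^ 2)
    (hoff : dist (toPlane u) ((1 / 2 : ℝ) • (toPlane v + toPlane w)) ≠ r) :
    |dist (toPlane u) ((1 / 2 : ℝ) • (toPlane v + toPlane w)) - r|
      ≥ 1 / (5 * (r : ℝ)) := by
  have hr' : (1 : ℝ) ≤ r := by exact_mod_cast hr
  set d := dist (toPlane u) ((1 / 2 : ℝ) • (toPlane v + toPlane w))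
  set n : ℤ := (u - v).1 * (u - w).1 + (u - v).2 * (u - w).2
  have hpower : d ^ 2 - (r : ℝ) ^ 2 = n := by
    rw [← inner_toPlane, ← toPlane_sub, ← toPlane_sub,
      real_inner_sub_sub_eq_dist_midpoint_sq_sub, hdiam]
    ring
  have hn : n ≠ 0 := by
    intro hn0
    rw [hn0, Int.cast_zero, sub_eq_zero] at hpower
    exact hoff ((sq_eq_sq₀ dist_nonneg (by linarith)).1 hpower)
  refine one_div_five_mul_le_abs_sub dist_nonneg hr' ?_
  rw [hpower]
  exact_mod_cast Int.one_le_abs hn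

/-- If `|v - w|² = 4r²` (so `[v, w]` is a diameter and the radius-`r` circle through
`v` and `w` is unique, centered at the midpoint) and the integer point `u` is off
this circle, then its distance to the circle is at least `1/(5r)`. -/
theorem stmt_5 (r : ℤ) (hr : 1 ≤ r) (u v w : ℤ × ℤ)
    (huv : u ≠ v) (huw : u ≠ w) (hvw : v ≠ w)
    (hdiam : dist (toPlane v) (toPlane w) ^ 2 = 4 * (r : ℝ) ^ 2)
    (hoff : dist (toPlane u) ((1 / 2 : ℝ) • (toPlane v + toPlane w)) ≠ r) :
    |dist (toPlane u) ((1 / 2 : ℝ) • (toPlane v + toPlane w)) - r|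
      ≥ 1 / (5 * (r : ℝ)) :=
  stmt_5_general r hr u v w hdiam hoff
end
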